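/- Under gradient descent w(k+1) = w(k) - η Z (O(k) - Y) for the linear model O(k) = Zᵀ w(k) with w(0) = 0, constant gradient matrix Z, G = ZᵀZ positive definite, and 0 < η ≤ 1/λ_max(G), the weight change is bounded for every k by ‖w(k) - w(0)‖₂ ≤ √(Yᵀ G^{-1} Y). -/

import Mathlib

/-!
The iterates stay in the range of `Z`, say `w k = Z u`, so `‖w k‖² = uᵀ G u` while the outputs
are `O k = G u`. In an orthonormal eigenbasis of `G` the `i`-th coordinate of `O k` evolves by
`t ↦ (1 - η λᵢ) t + η λᵢ yᵢ`, a convex combination of `t` and the coordinate `yᵢ` of `Y`, so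
`|t| ≤ |yᵢ|` throughout. Hence `uᵀ G u = ∑ tᵢ² / λᵢ ≤ ∑ yᵢ² / λᵢ = Yᵀ G⁻¹ Y`.
-/

open Matrix

namespace Matrix.IsHermitian

variable {n : Type*} [Fintype n] [DecidableEq n] {G : Matrix n n ℝ} (hG : G.IsHermitian)
include hG

theorem sum_eigenvectorBasis_dotProduct_mul (x y : n → ℝ) :
    ∑ i, (hG.eigenvectorBasis i ⬝ᵥ x) * (hG.eigenvectorBasis i ⬝ᵥ y) = x ⬝ᵥ y := by
  simpa [EuclideanSpace.inner_eq_star_dotProduct, dotProduct_comm, mul_comm] using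
    hG.eigenvectorBasis.sum_inner_mul_inner (WithLp.toLp 2 x) (WithLp.toLp 2 y)

theorem eigenvectorBasis_dotProduct_mulVec (i : n) (x : n → ℝ) :
    hG.eigenvectorBasis i ⬝ᵥ (G *ᵥ x) = hG.eigenvalues i * (hG.eigenvectorBasis i ⬝ᵥ x) := by
  rw [dotProduct_mulVec, ← mulVec_transpose, ← conjTranspose_eq_transpose_of_trivial, hG.eq,
    hG.mulVec_eigenvectorBasis, smul_dotProduct, smul_eq_mul]

theorem eigenvectorBasis_dotProduct_self (i : n) :
    hG.eigenvectorBasis i ⬝ᵥ hG.eigenvectorBasis i = 1 := by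
  simpa only [EuclideanSpace.inner_eq_star_dotProduct, star_trivial] using
    hG.eigenvectorBasis.inner_eq_one i

theorem dotProduct_mulVec_self_eq_sum (x : n → ℝ) :
    x ⬝ᵥ (G *ᵥ x) = ∑ i, hG.eigenvalues i * (hG.eigenvectorBasis i ⬝ᵥ x) ^ 2 := by
  rw [← hG.sum_eigenvectorBasis_dotProduct_mul]
  simp only [hG.eigenvectorBasis_dotProduct_mulVec]
  exact Finset.sum_congr rfl fun i _ ↦ by ring

theorem mul_eigenvalues_le_one_of_posSemidef {η : ℝ} (h : (1 - η • G).PosSemidef) (i : n) :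
    η * hG.eigenvalues i ≤ 1 := by
  have := h.dotProduct_mulVec_nonneg (hG.eigenvectorBasis i)
  rw [star_trivial, sub_mulVec, one_mulVec, smul_mulVec, dotProduct_sub, dotProduct_smul,
    hG.eigenvectorBasis_dotProduct_mulVec, hG.eigenvectorBasis_dotProduct_self] at this
  simpa using this

end Matrix.IsHermitian

namespace Matrix.PosDef

variable {n : Type*} [Fintype n] [DecidableEq n] {G : Matrix n n ℝ} (hG : G.PosDef)
include hG

theorem dotProduct_inv_mulVec_eq_sum (y : n → ℝ) :
    y ⬝ᵥ (G⁻¹ *ᵥ y) = ∑ i,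
      (hG.isHermitian.eigenvectorBasis i ⬝ᵥ y) ^ 2 / hG.isHermitian.eigenvalues i := by
  rw [← hG.isHermitian.sum_eigenvectorBasis_dotProduct_mul]
  refine Finset.sum_congr rfl fun i _ ↦ ?_
  have hy : G *ᵥ (G⁻¹ *ᵥ y) = y := by
    rw [mulVec_mulVec, mul_nonsing_inv _ ((isUnit_iff_isUnit_det G).mp hG.isUnit), one_mulVec]
  have hne := (hG.eigenvalues_pos i).ne'
  have hcoord := hG.isHermitian.eigenvectorBasis_dotProduct_mulVec i (G⁻¹ *ᵥ y)
  rw [hy] at hcoord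
  rw [hcoord]
  field_simp

theorem dotProduct_mulVec_self_le_inv {u y : n → ℝ}
    (h : ∀ i, |hG.isHermitian.eigenvectorBasis i ⬝ᵥ (G *ᵥ u)|
      ≤ |hG.isHermitian.eigenvectorBasis i ⬝ᵥ y|) :
    u ⬝ᵥ (G *ᵥ u) ≤ y ⬝ᵥ (G⁻¹ *ᵥ y) := by
  rw [hG.isHermitian.dotProduct_mulVec_self_eq_sum, hG.dotProduct_inv_mulVec_eq_sum]
  refine Finset.sum_le_sum fun i _ ↦ ?_
  have hpos := hG.eigenvalues_pos i
  have hi := sq_le_sq.mpr (h i)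
  rw [hG.isHermitian.eigenvectorBasis_dotProduct_mulVec, mul_pow] at hi
  rw [le_div_iff₀ hpos]
  nlinarith

end Matrix.PosDef

theorem abs_le_of_relaxation {a y : ℝ} (ha₀ : 0 ≤ a) (ha₁ : a ≤ 1) {t : ℕ → ℝ} (h₀ : t 0 = 0)
    (hsucc : ∀ k, t (k + 1) = t k - a * (t k - y)) (k : ℕ) : |t k| ≤ |y| := by
  induction k with
  | zero => simp [h₀]
  | succ k ih =>
    calc |t (k + 1)| = |(1 - a) * t k + a * y| := by rw [hsucc]; ring_nf
      _ ≤ (1 - a) * |t k| + a * |y| := by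
        grw [abs_add_le, abs_mul, abs_mul, abs_of_nonneg ha₀, abs_of_nonneg (sub_nonneg.2 ha₁)]
      _ ≤ |y| := by nlinarith

theorem exists_eq_mulVec_of_iterate {m n : Type*} [Fintype n] (Z : Matrix m n ℝ) (η : ℝ)
    {w : ℕ → m → ℝ} {r : ℕ → n → ℝ} (h₀ : w 0 = 0) (hsucc : ∀ k, w (k + 1) = w k - η • Z *ᵥ r k)
    (k : ℕ) : ∃ u, w k = Z *ᵥ u := by
  induction k with
  | zero => exact ⟨0, by simp [h₀]⟩
  | succ k ih =>
    obtain ⟨u, hu⟩ := ih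
    exact ⟨u - η • r k, by rw [hsucc, hu, mulVec_sub, mulVec_smul]⟩

/-- Under gradient descent `w (k+1) = w k - η Z (O k - Y)` for the
linear model `O k = Zᵀ w k`, with `w 0 = 0`, `G = ZᵀZ` positive definite and
`η λ_max(G) ≤ 1` (expressed as `I - η G` PSD), the weight change satisfies
`‖w k - w 0‖₂ ≤ √(Yᵀ G⁻¹ Y)` for every `k`. -/
theorem stmt_8 {m n : ℕ} (Z : Matrix (Fin m) (Fin n) ℝ) (Y : Fin n → ℝ)
    (G : Matrix (Fin n) (Fin n) ℝ) (hGdef : G = Zᵀ * Z) (hG : G.PosDef)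
    (η : ℝ) (hη : 0 < η)
    (hmax : ((1 : Matrix (Fin n) (Fin n) ℝ) - η • G).PosSemidef)
    (w : ℕ → (Fin m → ℝ)) (hw0 : w 0 = 0)
    (O : ℕ → (Fin n → ℝ)) (hO : ∀ k, O k = Zᵀ.mulVec (w k))
    (hrec : ∀ k, w (k + 1) = w k - η • Z.mulVec (O k - Y)) :
    ∀ k, Real.sqrt (∑ r, (w k r - w 0 r) ^ 2) ≤
      Real.sqrt (Y ⬝ᵥ G⁻¹.mulVec Y) := by
  set b := hG.isHermitian.eigenvectorBasis
  have hOsucc : ∀ k, O (k + 1) = O k - η • G *ᵥ (O k - Y) := fun k ↦ by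
    rw [hO, hrec, mulVec_sub, mulVec_smul, mulVec_mulVec, ← hGdef, ← hO]
  have hcoord (i : Fin n) (k : ℕ) : |b i ⬝ᵥ O k| ≤ |b i ⬝ᵥ Y| := by
    refine abs_le_of_relaxation (mul_pos hη (hG.eigenvalues_pos i)).le
      (hG.isHermitian.mul_eigenvalues_le_one_of_posSemidef hmax i) (t := fun k ↦ b i ⬝ᵥ O k)
      (by simp [hO, hw0]) (fun k ↦ ?_) k
    rw [hOsucc, dotProduct_sub, dotProduct_smul, hG.isHermitian.eigenvectorBasis_dotProduct_mulVec,
      dotProduct_sub, smul_eq_mul, mul_assoc]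
  intro k
  obtain ⟨u, hu⟩ := exists_eq_mulVec_of_iterate Z η hw0 hrec k
  have hOu : O k = G *ᵥ u := by rw [hO, hu, mulVec_mulVec, hGdef]
  apply Real.sqrt_le_sqrt
  calc ∑ r, (w k r - w 0 r) ^ 2 = Z *ᵥ u ⬝ᵥ Z *ᵥ u := by simp [hw0, hu, dotProduct, sq]
    _ = u ⬝ᵥ G *ᵥ u := by
      rw [hGdef, ← mulVec_mulVec, dotProduct_mulVec, ← mulVec_transpose, dotProduct_comm]
    _ ≤ Y ⬝ᵥ G⁻¹ *ᵥ Y := hG.dotProduct_mulVec_self_le_inv fun i ↦ hOu ▸ hcoord i k
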